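/- There exist constants c₁, c₂, c₃, c₄ > 0 such that for every ε ∈ (0, 1/2) there is a neural network Φ_ε with one-dimensional input and output, at most c₁·log₂(1/ε) nonzero weights, at most c₂·log₂(1/ε) layers, and at most c₃·log₂(1/ε) neurons, whose ReLU realization g := R_ρ(Φ_ε) satisfies: (1) sup_{x∈[0,1]} |g(x) − x²| ≤ ε; (2) the function x ↦ g(x) − x² is ε-Lipschitz on [0,1]; (3) g(0) = 0; and (4) g is c₄-Lipschitz on [0,1]. -/

import Mathlib

/-!
The tent map `T x = 2 ρ(x) - 4 ρ(x - 1/2)` costs two ReLU neurons, maps `[0,1]` onto itself,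
is `2`-Lipschitz there, and satisfies `T x / 2 - (T x)² / 4 = x - x²`. Hence
`f_m x = x - ∑_{s=1}^m T^[s] x / 4^s` obeys `f_{m+1} x - x² = (f_m (T x) - (T x)²) / 4`, and
induction shows that the error `f_m - x²` is `2^{-m}`-Lipschitz on `[0,1]`; as it vanishes at
`0`, it is also bounded by `2^{-m}`. A network of `m` hidden layers of width two, computing
the iterates of `T`, with skip connections into the output, realizes `f_m`; take
`m = ⌈log₂(1/ε)⌉`.
-/

noncomputable section

open Finset

/-- The ReLU activation function `x ↦ max 0 x`. -/
def relu (x : ℝ) : ℝ := max 0 x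

/-- A feedforward neural network with possible skip connections.
The entry `A l k i j` is the weight connecting neuron `j` of layer `k` to neuron `i` of
layer `l` (meaningful for `1 ≤ l ≤ L`, `k < l`, `i < arity l`, `j < arity k`), and
`b l i` is the bias of neuron `i` of layer `l`.  Entries outside the meaningful ranges
are irrelevant: they influence neither the realization nor the complexity counts. -/
structure NN where
  d : ℕ
  L : ℕ
  hL : 0 < L
  arity : ℕ → ℕ
  harity : arity 0 = d
  A : ℕ → ℕ → ℕ → ℕ → ℝ
  b : ℕ → ℕ → ℝ

namespace NN

/-- The vector of neuron values at layer `l`; layer `0` is the (truncated) input, and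
for `l ≥ 1` the activation `ρ` is applied componentwise. -/
def hidden (Φ : NN) (ρ : ℝ → ℝ) (x : ℕ → ℝ) : ℕ → ℕ → ℝ
  | 0 => fun i => if i < Φ.d then x i else 0
  | l + 1 => fun i =>
      ρ ((∑ k : Fin (l + 1), ∑ j ∈ Finset.range (Φ.arity k),
        Φ.A (l + 1) k i j * Φ.hidden ρ x k j) + Φ.b (l + 1) i)
  termination_by l => l
  decreasing_by exact k.isLt

/-- The realization `R_ρ(Φ)` of the network `Φ` with activation function `ρ`:
no activation is applied in the last layer `L`. -/
def realize (Φ : NN) (ρ : ℝ → ℝ) (x : ℕ → ℝ) : ℕ → ℝ := fun i =>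
  (∑ k : Fin Φ.L, ∑ j ∈ Finset.range (Φ.arity k),
    Φ.A Φ.L k i j * Φ.hidden ρ x k j) + Φ.b Φ.L i

/-- The output dimension `N_L` of a network. -/
def outDim (Φ : NN) : ℕ := Φ.arity Φ.L

/-- The number of neurons `N(Φ) = d + N_1 + … + N_L`. -/
def numNeurons (Φ : NN) : ℕ := ∑ l ∈ Finset.range (Φ.L + 1), Φ.arity l

/-- The number of nonzero weights `M(Φ)`. -/
def numWeights (Φ : NN) : ℕ :=
  ∑ l ∈ Finset.Icc 1 Φ.L,
    ((∑ k ∈ Finset.range l,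
        {p : ℕ × ℕ | p.1 < Φ.arity l ∧ p.2 < Φ.arity k ∧ Φ.A l k p.1 p.2 ≠ 0}.ncard) +
      {i : ℕ | i < Φ.arity l ∧ Φ.b l i ≠ 0}.ncard)

/-- A standard neural network: only neurons in neighboring layers are connected. -/
def IsStandard (Φ : NN) : Prop :=
  ∀ l k, l ≤ Φ.L → k + 2 ≤ l → ∀ i j, i < Φ.arity l → j < Φ.arity k → Φ.A l k i j = 0

/-- A neural network architecture: a network all of whose entries are `0` or `1`. -/
def IsArchitecture (𝒜 : NN) : Prop :=
  (∀ l k i j, 𝒜.A l k i j = 0 ∨ 𝒜.A l k i j = 1) ∧ ∀ l i, 𝒜.b l i = 0 ∨ 𝒜.b l i = 1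

/-- `Φ` has architecture `𝒜`: same layer dimensions, and nonzero entries of `Φ` occur
only at positions where `𝒜` is nonzero. -/
def HasArchitecture (Φ 𝒜 : NN) : Prop :=
  Φ.d = 𝒜.d ∧ Φ.L = 𝒜.L ∧ (∀ l, Φ.arity l = 𝒜.arity l) ∧
    (∀ l k i j, Φ.A l k i j ≠ 0 → 𝒜.A l k i j ≠ 0) ∧
    (∀ l i, Φ.b l i ≠ 0 → 𝒜.b l i ≠ 0)

end NN

/-- Embedding of `ℝ^d` into the input signals `ℕ → ℝ` of a network. -/
def embed (d : ℕ) (x : Fin d → ℝ) : ℕ → ℝ := fun i => if h : i < d then x ⟨i, h⟩ else 0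

/-- The unit cube `[0,1]^d`. -/
def cube (d : ℕ) : Set (Fin d → ℝ) := {x | ∀ i, x i ∈ Set.Icc (0 : ℝ) 1}

/-- The piecewise linear bump function `ψ`. -/
def bump (x : ℝ) : ℝ := if |x| < 1 then 1 else if |x| ≤ 2 then 2 - |x| else 0

/-- The partition-of-unity function `φ_m(x) = ∏_l ψ(3N(x_l − m_l/N))`. -/
def pou (d N : ℕ) (m : Fin d → ℕ) (x : Fin d → ℝ) : ℝ :=
  ∏ l, bump (3 * N * (x l - m l / N))

/-- The polynomial `x ↦ ∑_{|α| ≤ n−1} c_α x^α` with coefficients `c`. -/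
def poly (d n : ℕ) (c : (Fin d → Fin n) → ℝ) (x : Fin d → ℝ) : ℝ :=
  ∑ α ∈ Finset.univ.filter (fun α : Fin d → Fin n => (∑ l, (α l : ℕ)) ≤ n - 1),
    c α * ∏ l, x l ^ (α l : ℕ)

/-- The partial derivative in the `i`-th coordinate direction. -/
def pderivAt {d : ℕ} (i : Fin d) (f : (Fin d → ℝ) → ℝ) : (Fin d → ℝ) → ℝ :=
  fun x => fderiv ℝ f x (Pi.single i 1)

/-- Iterated partial derivative `D^α f` along a list of coordinate directions. -/
def pdList {d : ℕ} : List (Fin d) → ((Fin d → ℝ) → ℝ) → ((Fin d → ℝ) → ℝ)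
  | [], f => f
  | i :: t, f => pdList t (pderivAt i f)

/-- `f` lies in the `W^{n,∞}`-ball of radius `B` on `[0,1]^d`: it is `(n−1)`-times
continuously differentiable on an open set containing the cube, all partial derivatives
of order `≤ n−1` are bounded by `B` on the cube, and those of order `n−1` are
`B`-Lipschitz on the cube with respect to the Euclidean norm. -/
def InWBall (d n : ℕ) (B : ℝ) (f : (Fin d → ℝ) → ℝ) : Prop :=
  (∃ U : Set (Fin d → ℝ), IsOpen U ∧ cube d ⊆ U ∧ ContDiffOn ℝ (n - 1 : ℕ) f U) ∧
    (∀ l : List (Fin d), l.length ≤ n - 1 → ∀ x ∈ cube d, |pdList l f x| ≤ B) ∧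
    (∀ l : List (Fin d), l.length = n - 1 → ∀ x ∈ cube d, ∀ y ∈ cube d,
      |pdList l f x - pdList l f y| ≤ B * Real.sqrt (∑ i, (x i - y i) ^ 2))

open Set

lemma Set.ncard_lt_prod_le (a b : ℕ) (P : ℕ × ℕ → Prop) :
    {p : ℕ × ℕ | p.1 < a ∧ p.2 < b ∧ P p}.ncard ≤ a * b := by
  calc _ ≤ (Iio a ×ˢ Iio b).ncard :=
        ncard_le_ncard (fun p hp => ⟨hp.1, hp.2.1⟩) ((finite_Iio a).prod (finite_Iio b))
    _ = a * b := by rw [ncard_prod, ncard_Iio_nat, ncard_Iio_nat]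

lemma Set.ncard_lt_le (a : ℕ) (P : ℕ → Prop) : {i | i < a ∧ P i}.ncard ≤ a :=
  (ncard_le_ncard (fun _ hi => hi.1) (finite_Iio a)).trans (ncard_Iio_nat a).le

namespace NN

def layerNumWeights (Φ : NN) (l : ℕ) : ℕ :=
  (∑ k ∈ Finset.range l,
      {p : ℕ × ℕ | p.1 < Φ.arity l ∧ p.2 < Φ.arity k ∧ Φ.A l k p.1 p.2 ≠ 0}.ncard) +
    {i : ℕ | i < Φ.arity l ∧ Φ.b l i ≠ 0}.ncard

lemma numWeights_eq_sum_layerNumWeights (Φ : NN) :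
    Φ.numWeights = ∑ l ∈ Finset.Icc 1 Φ.L, Φ.layerNumWeights l := rfl

lemma layerNumWeights_le (Φ : NN) (l : ℕ) (S : Finset ℕ)
    (hS : ∀ k ∈ Finset.range l, k ∉ S → ∀ i j, Φ.A l k i j = 0) :
    Φ.layerNumWeights l ≤ ∑ k ∈ S, Φ.arity l * Φ.arity k + Φ.arity l := by
  classical
  have hA : ∀ k ∈ Finset.range l,
      {p : ℕ × ℕ | p.1 < Φ.arity l ∧ p.2 < Φ.arity k ∧ Φ.A l k p.1 p.2 ≠ 0}.ncard ≤
        if k ∈ S then Φ.arity l * Φ.arity k else 0 := by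
    intro k hk
    split_ifs with hkS
    · exact ncard_lt_prod_le _ _ _
    · simp [hS k hk hkS]
  calc Φ.layerNumWeights l
      ≤ ∑ k ∈ Finset.range l, (if k ∈ S then Φ.arity l * Φ.arity k else 0) + Φ.arity l :=
        add_le_add (Finset.sum_le_sum hA) (ncard_lt_le _ _)
    _ ≤ ∑ k ∈ S, Φ.arity l * Φ.arity k + Φ.arity l := by
        rw [Finset.sum_ite_mem]
        gcongr
        exact Finset.inter_subset_right

lemma numNeurons_le_of_arity_le (Φ : NN) {w : ℕ} (h : ∀ l, Φ.arity l ≤ w) :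
    Φ.numNeurons ≤ w * (Φ.L + 1) := by
  calc Φ.numNeurons ≤ ∑ _l ∈ Finset.range (Φ.L + 1), w := Finset.sum_le_sum fun l _ => h l
    _ = w * (Φ.L + 1) := by rw [Finset.sum_const, Finset.card_range, smul_eq_mul, mul_comm]

lemma hidden_zero (Φ : NN) (ρ : ℝ → ℝ) (x : ℕ → ℝ) (i : ℕ) :
    Φ.hidden ρ x 0 i = if i < Φ.d then x i else 0 := by
  rw [hidden]

lemma hidden_succ (Φ : NN) (ρ : ℝ → ℝ) (x : ℕ → ℝ) (l i : ℕ) :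
    Φ.hidden ρ x (l + 1) i = ρ ((∑ k : Fin (l + 1), ∑ j ∈ Finset.range (Φ.arity k),
        Φ.A (l + 1) k i j * Φ.hidden ρ x k j) + Φ.b (l + 1) i) := by
  rw [hidden]

end NN

def tent (x : ℝ) : ℝ := 2 * relu x - 4 * relu (x - 1 / 2)

lemma tent_eq_one_sub_abs {x : ℝ} (hx : 0 ≤ x) : tent x = 1 - |1 - 2 * x| := by
  rcases le_total x (1 / 2) with h | h
  · rw [tent, relu, relu, max_eq_right hx, max_eq_left (by linarith),
      abs_of_nonneg (by linarith)]
    ring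
  · rw [tent, relu, relu, max_eq_right hx, max_eq_right (by linarith),
      abs_of_nonpos (by linarith)]
    ring

lemma tent_zero : tent 0 = 0 := by
  rw [tent_eq_one_sub_abs le_rfl]; norm_num

lemma tent_mem_Icc {x : ℝ} (hx : x ∈ Icc (0 : ℝ) 1) : tent x ∈ Icc (0 : ℝ) 1 := by
  rw [tent_eq_one_sub_abs hx.1]
  have h : |1 - 2 * x| ≤ 1 := abs_le.2 ⟨by linarith [hx.2], by linarith [hx.1]⟩
  exact ⟨by linarith, by linarith [abs_nonneg (1 - 2 * x)]⟩

lemma abs_tent_sub_tent_le {x y : ℝ} (hx : 0 ≤ x) (hy : 0 ≤ y) :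
    |tent x - tent y| ≤ 2 * |x - y| := by
  rw [tent_eq_one_sub_abs hx, tent_eq_one_sub_abs hy]
  calc |1 - |1 - 2 * x| - (1 - |1 - 2 * y|)| = |(|1 - 2 * y| - |1 - 2 * x|)| := by ring_nf
    _ ≤ |(1 - 2 * y) - (1 - 2 * x)| := abs_abs_sub_abs_le_abs_sub _ _
    _ = 2 * |x - y| := by
        rw [show (1 - 2 * y) - (1 - 2 * x) = 2 * (x - y) by ring, abs_mul, abs_two]

lemma tent_div_two_sub_sq {x : ℝ} (hx : 0 ≤ x) :
    tent x / 2 - tent x ^ 2 / 4 = x - x ^ 2 := by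
  rw [tent_eq_one_sub_abs hx]
  nlinarith [sq_abs (1 - 2 * x)]

def sqApprox (m : ℕ) (x : ℝ) : ℝ :=
  x - ∑ s ∈ Finset.range m, tent^[s + 1] x / 4 ^ (s + 1)

lemma sqApprox_zero_right (m : ℕ) : sqApprox m 0 = 0 := by
  simp [sqApprox, Function.iterate_fixed tent_zero]

lemma sqApprox_succ (m : ℕ) (x : ℝ) :
    sqApprox (m + 1) x = x - tent x / 2 + sqApprox m (tent x) / 4 := by
  have h : ∑ s ∈ Finset.range m, tent^[s + 1 + 1] x / 4 ^ (s + 1 + 1) =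
      (∑ s ∈ Finset.range m, tent^[s + 1] (tent x) / 4 ^ (s + 1)) / 4 := by
    rw [Finset.sum_div]
    refine Finset.sum_congr rfl fun s _ => ?_
    rw [Function.iterate_succ_apply, pow_succ _ (s + 1), div_div]
  rw [sqApprox, sqApprox, Finset.sum_range_succ', h, zero_add, pow_one,
    Function.iterate_one]
  ring

lemma sqApprox_succ_sub_sq (m : ℕ) {x : ℝ} (hx : 0 ≤ x) :
    sqApprox (m + 1) x - x ^ 2 = (sqApprox m (tent x) - tent x ^ 2) / 4 := by
  rw [sqApprox_succ]
  linarith [tent_div_two_sub_sq hx]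

lemma abs_sqApprox_sub_sq_sub_le (m : ℕ) {x y : ℝ} (hx : x ∈ Icc (0 : ℝ) 1)
    (hy : y ∈ Icc (0 : ℝ) 1) :
    |(sqApprox m x - x ^ 2) - (sqApprox m y - y ^ 2)| ≤ (1 / 2) ^ m * |x - y| := by
  induction m generalizing x y with
  | zero =>
    have h : |1 - (x + y)| ≤ 1 :=
      abs_le.2 ⟨by linarith [hx.2, hy.2], by linarith [hx.1, hy.1]⟩
    calc |(sqApprox 0 x - x ^ 2) - (sqApprox 0 y - y ^ 2)| = |x - y| * |1 - (x + y)| := by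
          rw [← abs_mul]; simp only [sqApprox]; ring_nf
      _ ≤ (1 / 2) ^ 0 * |x - y| := by nlinarith [abs_nonneg (x - y)]
  | succ m ih =>
    rw [sqApprox_succ_sub_sq m hx.1, sqApprox_succ_sub_sq m hy.1, ← sub_div, abs_div,
      abs_of_pos (four_pos : (0 : ℝ) < 4)]
    calc |(sqApprox m (tent x) - tent x ^ 2) - (sqApprox m (tent y) - tent y ^ 2)| / 4
        ≤ (1 / 2) ^ m * |tent x - tent y| / 4 := by
          gcongr; exact ih (tent_mem_Icc hx) (tent_mem_Icc hy)
      _ ≤ (1 / 2) ^ m * (2 * |x - y|) / 4 := by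
          gcongr; exact abs_tent_sub_tent_le hx.1 hy.1
      _ = (1 / 2) ^ (m + 1) * |x - y| := by ring

lemma abs_sqApprox_sub_sq_le (m : ℕ) {x : ℝ} (hx : x ∈ Icc (0 : ℝ) 1) :
    |sqApprox m x - x ^ 2| ≤ (1 / 2) ^ m := by
  have h := abs_sqApprox_sub_sq_sub_le m hx (left_mem_Icc.2 zero_le_one)
  norm_num [sqApprox_zero_right, abs_of_nonneg hx.1] at h
  exact h.trans (mul_le_of_le_one_right (by positivity) hx.2)

lemma abs_sqApprox_sub_le (m : ℕ) {x y : ℝ} (hx : x ∈ Icc (0 : ℝ) 1)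
    (hy : y ∈ Icc (0 : ℝ) 1) : |sqApprox m x - sqApprox m y| ≤ 3 * |x - y| := by
  have hsq : |x ^ 2 - y ^ 2| ≤ 2 * |x - y| := by
    rw [sq_sub_sq, abs_mul]
    gcongr
    exact abs_le.2 ⟨by linarith [hx.1, hy.1], by linarith [hx.2, hy.2]⟩
  have herr := abs_sqApprox_sub_sq_sub_le m hx hy
  have hm : (1 / 2 : ℝ) ^ m ≤ 1 := pow_le_one₀ (by norm_num) (by norm_num)
  calc |sqApprox m x - sqApprox m y|
      = |((sqApprox m x - x ^ 2) - (sqApprox m y - y ^ 2)) + (x ^ 2 - y ^ 2)| := by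
        congr 1; ring
    _ ≤ |(sqApprox m x - x ^ 2) - (sqApprox m y - y ^ 2)| + |x ^ 2 - y ^ 2| := abs_add_le _ _
    _ ≤ 3 * |x - y| := by nlinarith [abs_nonneg (x - y)]

def readoutWeight : ℕ → ℕ → ℝ
  | 0, _ => 1
  | _ + 1, 0 => 2
  | _ + 1, _ => -4

/-- Hidden layer `l ∈ [1, m]` holds `relu (tent^[l-1] x)` and `relu (tent^[l-1] x - 1/2)`,
from which `readoutWeight l` recovers `tent^[l] x`; the output layer reads
`x - ∑ tent^[k] x / 4^k` off all layers through skip connections. -/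
def sqApproxNet (m : ℕ) : NN where
  d := 1
  L := m + 1
  hL := m.succ_pos
  arity l := if l = 0 ∨ l = m + 1 then 1 else 2
  harity := by simp
  A l k _ j :=
    if l = m + 1 then (if k = 0 then 1 else -(1 / 4) ^ k) * readoutWeight k j
    else if k + 1 = l then readoutWeight k j else 0
  b _ i := if i = 1 then -(1 / 2) else 0

namespace sqApproxNet

lemma arity_le_two (m l : ℕ) : (sqApproxNet m).arity l ≤ 2 := by
  simp only [sqApproxNet]; split_ifs <;> norm_num

lemma outDim_eq (m : ℕ) : (sqApproxNet m).outDim = 1 := by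
  simp [sqApproxNet, NN.outDim]

lemma arity_of_le {m l : ℕ} (hl : 1 ≤ l) (hlm : l ≤ m) : (sqApproxNet m).arity l = 2 := by
  simp only [sqApproxNet, if_neg (show ¬(l = 0 ∨ l = m + 1) by omega)]

lemma hidden_succ {m l : ℕ} (x : ℝ) (hl : l + 1 ≤ m) (i : ℕ) :
    (sqApproxNet m).hidden relu (fun _ => x) (l + 1) i =
      relu (∑ j ∈ Finset.range ((sqApproxNet m).arity l),
          readoutWeight l j * (sqApproxNet m).hidden relu (fun _ => x) l j +
        if i = 1 then -(1 / 2) else 0) := by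
  rw [NN.hidden_succ, Fintype.sum_eq_single (Fin.last l)]
  · simp [sqApproxNet, show l ≠ m by omega]
  · intro k hk
    have hkl : (k : ℕ) ≠ l := fun h => hk (Fin.ext (by simpa using h))
    simp [sqApproxNet, show l ≠ m by omega, hkl]

lemma sum_readoutWeight_mul_hidden {m k : ℕ} (x : ℝ) (hk : k ≤ m) :
    ∑ j ∈ Finset.range ((sqApproxNet m).arity k),
      readoutWeight k j * (sqApproxNet m).hidden relu (fun _ => x) k j = tent^[k] x := by
  induction k with
  | zero => simp [sqApproxNet, NN.hidden_zero, readoutWeight]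
  | succ k ih =>
    rw [arity_of_le (by omega) hk, Finset.sum_range_succ, Finset.sum_range_one,
      hidden_succ x hk, hidden_succ x hk, ih (by omega), Function.iterate_succ_apply', tent]
    simp [readoutWeight, sub_eq_add_neg]

lemma realize_eq_sqApprox (m : ℕ) (x : ℝ) :
    (sqApproxNet m).realize relu (fun _ => x) 0 = sqApprox m x := by
  have hout : ∀ k : Fin (m + 1), ∑ j ∈ Finset.range ((sqApproxNet m).arity k),
      (sqApproxNet m).A (m + 1) k 0 j * (sqApproxNet m).hidden relu (fun _ => x) k j =
        (if (k : ℕ) = 0 then 1 else -(1 / 4) ^ (k : ℕ)) * tent^[k] x := by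
    intro k
    rw [← sum_readoutWeight_mul_hidden x (Nat.lt_succ_iff.1 k.isLt), Finset.mul_sum]
    refine Finset.sum_congr rfl fun j _ => ?_
    simp only [sqApproxNet, if_true]
    ring
  change ∑ k : Fin (m + 1), ∑ j ∈ Finset.range ((sqApproxNet m).arity k),
      (sqApproxNet m).A (m + 1) k 0 j * (sqApproxNet m).hidden relu (fun _ => x) k j +
    (sqApproxNet m).b (m + 1) 0 = _
  rw [Finset.sum_congr rfl fun k _ => hout k, Fin.sum_univ_succ]
  simp [sqApproxNet, sqApprox,
    Fin.sum_univ_eq_sum_range (fun s => (4 ^ (s + 1) : ℝ)⁻¹ * tent^[s] (tent x)) m,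
    div_eq_inv_mul, sub_eq_add_neg]

lemma numNeurons_le (m : ℕ) : (sqApproxNet m).numNeurons ≤ 2 * (m + 2) :=
  (sqApproxNet m).numNeurons_le_of_arity_le (arity_le_two m)

lemma numWeights_le (m : ℕ) : (sqApproxNet m).numWeights ≤ 8 * m + 3 := by
  have hhidden : ∀ l ∈ Finset.Icc 1 m, (sqApproxNet m).layerNumWeights l ≤ 6 := by
    intro l hl
    obtain ⟨hl1, hlm⟩ := Finset.mem_Icc.1 hl
    refine ((sqApproxNet m).layerNumWeights_le l {l - 1} ?_).trans ?_
    · intro k hk hkS i j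
      simp only [Finset.mem_range, Finset.mem_singleton] at hk hkS
      simp only [sqApproxNet, if_neg (show l ≠ m + 1 by omega),
        if_neg (show k + 1 ≠ l by omega)]
    · rw [Finset.sum_singleton, arity_of_le hl1 hlm]
      nlinarith [arity_le_two m (l - 1)]
  have hout : (sqApproxNet m).layerNumWeights (m + 1) ≤ 2 * (m + 1) + 1 := by
    refine ((sqApproxNet m).layerNumWeights_le (m + 1) (Finset.range (m + 1))
      fun k hk hkS => (hkS hk).elim).trans ?_
    simp only [show (sqApproxNet m).arity (m + 1) = 1 from outDim_eq m, one_mul,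
      add_le_add_iff_right]
    calc ∑ k ∈ Finset.range (m + 1), (sqApproxNet m).arity k
        ≤ ∑ _k ∈ Finset.range (m + 1), 2 := Finset.sum_le_sum fun k _ => arity_le_two m k
      _ = 2 * (m + 1) := by rw [Finset.sum_const, Finset.card_range, smul_eq_mul, mul_comm]
  have hsum := Finset.sum_le_sum hhidden
  rw [Finset.sum_const, Nat.card_Icc, smul_eq_mul] at hsum
  rw [NN.numWeights_eq_sum_layerNumWeights, show (sqApproxNet m).L = m + 1 from rfl,
    Finset.sum_Icc_succ_top (by omega)]
  omega

end sqApproxNet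

lemma exists_half_pow_le {ε : ℝ} (hε0 : 0 < ε) (hε : ε < 1 / 2) :
    ∃ m : ℕ, 1 ≤ m ∧ (m : ℝ) ≤ 2 * Real.logb 2 (1 / ε) ∧
      (1 / 2 : ℝ) ^ m ≤ ε := by
  set r := Real.logb 2 (1 / ε)
  have hr : 1 ≤ r := by
    rw [Real.le_logb_iff_rpow_le one_lt_two (by positivity), Real.rpow_one,
      le_div_iff₀ hε0]
    linarith
  refine ⟨⌈r⌉₊, Nat.one_le_ceil_iff.2 (by linarith), ?_, ?_⟩
  · linarith [Nat.ceil_lt_add_one (by linarith : 0 ≤ r)]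
  · have h : 1 / ε ≤ 2 ^ ⌈r⌉₊ := by
      rw [← Real.rpow_natCast, ← Real.logb_le_iff_le_rpow one_lt_two (by positivity)]
      exact Nat.le_ceil r
    rw [div_pow, one_pow, div_le_iff₀ (by positivity)]
    rwa [div_le_iff₀ hε0, mul_comm] at h

/-- **Approximation of the square function in `W^{1,∞}`.**
There are constants `c₁, c₂, c₃, c₄ > 0` such that for every `ε ∈ (0, 1/2)` there is a
ReLU network with one-dimensional input and output, of size `O(log₂(1/ε))` in weights,
layers and neurons, whose realization `g` satisfies `sup_{[0,1]} |g − x²| ≤ ε`,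
`g − x²` is `ε`-Lipschitz on `[0,1]`, `g(0) = 0`, and `g` is `c₄`-Lipschitz on
`[0,1]`. -/
theorem square_approximation_network :
    ∃ c₁ c₂ c₃ c₄ : ℝ, 0 < c₁ ∧ 0 < c₂ ∧ 0 < c₃ ∧ 0 < c₄ ∧
      ∀ ε ∈ Set.Ioo (0 : ℝ) (1 / 2),
        ∃ Φ : NN, Φ.d = 1 ∧ Φ.outDim = 1 ∧
          (Φ.numWeights : ℝ) ≤ c₁ * Real.logb 2 (1 / ε) ∧
          (Φ.L : ℝ) ≤ c₂ * Real.logb 2 (1 / ε) ∧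
          (Φ.numNeurons : ℝ) ≤ c₃ * Real.logb 2 (1 / ε) ∧
          (∀ x ∈ Set.Icc (0 : ℝ) 1,
            |Φ.realize relu (fun _ => x) 0 - x ^ 2| ≤ ε) ∧
          (∀ x ∈ Set.Icc (0 : ℝ) 1, ∀ y ∈ Set.Icc (0 : ℝ) 1,
            |(Φ.realize relu (fun _ => x) 0 - x ^ 2) -
              (Φ.realize relu (fun _ => y) 0 - y ^ 2)| ≤ ε * |x - y|) ∧
          Φ.realize relu (fun _ => (0 : ℝ)) 0 = 0 ∧
          (∀ x ∈ Set.Icc (0 : ℝ) 1, ∀ y ∈ Set.Icc (0 : ℝ) 1,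
            |Φ.realize relu (fun _ => x) 0 - Φ.realize relu (fun _ => y) 0| ≤
              c₄ * |x - y|) := by
  refine ⟨22, 4, 12, 3, by norm_num, by norm_num, by norm_num, by norm_num, ?_⟩
  rintro ε ⟨hε0, hε⟩
  obtain ⟨m, hm1, hmr, hmε⟩ := exists_half_pow_le hε0 hε
  have hm : (1 : ℝ) ≤ m := by exact_mod_cast hm1
  have hlip : ∀ x ∈ Icc (0 : ℝ) 1, ∀ y ∈ Icc (0 : ℝ) 1,
      |(sqApprox m x - x ^ 2) - (sqApprox m y - y ^ 2)| ≤ ε * |x - y| := fun x hx y hy =>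
    (abs_sqApprox_sub_sq_sub_le m hx hy).trans (by gcongr)
  have hweights : ((sqApproxNet m).numWeights : ℝ) ≤ 8 * m + 3 := by
    exact_mod_cast sqApproxNet.numWeights_le m
  have hneurons : ((sqApproxNet m).numNeurons : ℝ) ≤ 2 * (m + 2) := by
    exact_mod_cast sqApproxNet.numNeurons_le m
  have hlayers : ((sqApproxNet m).L : ℝ) = m + 1 := by norm_cast
  refine ⟨sqApproxNet m, rfl, sqApproxNet.outDim_eq m, by linarith, by linarith, by linarith,
    ?_⟩
  simp only [sqApproxNet.realize_eq_sqApprox]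
  refine ⟨fun x hx => (abs_sqApprox_sub_sq_le m hx).trans hmε, hlip, sqApprox_zero_right m,
    fun x hx y hy => abs_sqApprox_sub_le m hx hy⟩

end
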